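/- arXiv:2106.03340 — 4 statements merged into one kernel-verified Lean document; each statement's English description precedes it below -/
import Mathlib

section
/- Suppose k : 𝒵 × 𝒵 → ℝ is bounded and measurable and φ(X) is integrable. Then E[φ(X) k(Z,Z') φ(X')] = ∫_𝒵 ∫_𝒵 m(z) k(z,z') m(z') dP_Z(z) dP_Z(z'), i.e. the double expectation over an independent copy factorizes through the conditional mean function m. -/
/-!
Conditioning on `σ(Z)` lets one replace `φ(X)` by `m(Z)` inside any expectation against a bounded
`σ(Z)`-measurable weight. Integrating out the copy `(X', Z')` first, the inner integral becomes
`F(Z)` with `F z = ∫ k(z, z') m(z') dP_Z(z')`, which is bounded because `k` is; a second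
application of the same pull-out step replaces the remaining `φ(X)` by `m(Z)`.
-/

open MeasureTheory

section

variable {Ω 𝒵 : Type*} [MeasurableSpace Ω] [MeasurableSpace 𝒵]

theorem integral_comp_mul_eq_integral_map_mul_of_condExp
    (P : Measure Ω) [IsFiniteMeasure P] {Z : Ω → 𝒵} (hZ : Measurable Z)
    {f : Ω → ℝ} (hf : Integrable f P) {m : 𝒵 → ℝ} (hm : Measurable m)
    (hcond : (fun ω => m (Z ω)) =ᵐ[P] P[f | MeasurableSpace.comap Z inferInstance])
    {g : 𝒵 → ℝ} (hg : Measurable g) (c : ℝ) (hgc : ∀ z, |g z| ≤ c) :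
    ∫ ω, g (Z ω) * f ω ∂P = ∫ z, g z * m z ∂(P.map Z) := by
  have hgZ : StronglyMeasurable[MeasurableSpace.comap Z inferInstance] (fun ω => g (Z ω)) :=
    (hg.comp (Measurable.of_comap_le le_rfl)).stronglyMeasurable
  have hpull := condExp_stronglyMeasurable_mul_of_bound hZ.comap_le hgZ hf c
    (Filter.Eventually.of_forall fun ω => hgc (Z ω))
  calc ∫ ω, g (Z ω) * f ω ∂P
      = ∫ ω, (P[(fun ω => g (Z ω) * f ω) | MeasurableSpace.comap Z inferInstance]) ω ∂P :=
        (integral_condExp hZ.comap_le).symm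
    _ = ∫ ω, g (Z ω) * m (Z ω) ∂P := by
        refine integral_congr_ae ?_
        filter_upwards [hpull, hcond] with ω hω hmω
        rw [hmω]
        exact hω
    _ = ∫ z, g z * m z ∂(P.map Z) :=
        (integral_map hZ.aemeasurable (hg.mul hm).aestronglyMeasurable).symm

theorem measurable_integral_mul_right {α : Type*} [MeasurableSpace α] (μ : Measure 𝒵) [SFinite μ]
    {k : α → 𝒵 → ℝ} (hk : Measurable (Function.uncurry k)) {m : 𝒵 → ℝ} (hm : Measurable m) :
    Measurable fun a => ∫ z, k a z * m z ∂μ :=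
  (StronglyMeasurable.integral_prod_right' (f := fun p : α × 𝒵 => k p.1 p.2 * m p.2)
    (hk.mul (hm.comp measurable_snd)).stronglyMeasurable).measurable

theorem abs_integral_mul_le_of_abs_le (μ : Measure 𝒵) {k : 𝒵 → ℝ} {C : ℝ} (hk : ∀ z, |k z| ≤ C)
    {m : 𝒵 → ℝ} (hm : Integrable m μ) :
    |∫ z, k z * m z ∂μ| ≤ C * ∫ z, |m z| ∂μ := by
  rw [← integral_const_mul, ← Real.norm_eq_abs]
  refine norm_integral_le_of_norm_le (hm.abs.const_mul C) (Filter.Eventually.of_forall fun z => ?_)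
  rw [Real.norm_eq_abs, abs_mul]
  exact mul_le_mul_of_nonneg_right (hk z) (abs_nonneg _)

end

theorem statement_1_general
    {Ω 𝒳 𝒵 : Type*} [MeasurableSpace Ω] [MeasurableSpace 𝒳] [MeasurableSpace 𝒵]
    (P : Measure Ω) [IsProbabilityMeasure P]
    (X : Ω → 𝒳) (Z : Ω → 𝒵) (hZ : Measurable Z)
    (φ : 𝒳 → ℝ)
    (k : 𝒵 → 𝒵 → ℝ) (hk_meas : Measurable (Function.uncurry k))
    (C : ℝ) (hk_bdd : ∀ z z', |k z z'| ≤ C)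
    (hφint : Integrable (fun ω => φ (X ω)) P)
    (m : 𝒵 → ℝ) (hm : Measurable m)
    (hcond : (fun ω => m (Z ω)) =ᵐ[P]
      P[(fun ω => φ (X ω)) | MeasurableSpace.comap Z inferInstance]) :
    ∫ ω, ∫ ω', φ (X ω) * (k (Z ω) (Z ω') * φ (X ω')) ∂P ∂P
      = ∫ z, ∫ z', m z * (k z z' * m z') ∂(P.map Z) ∂(P.map Z) := by
  have hm_int : Integrable m (P.map Z) :=
    (integrable_map_measure hm.aestronglyMeasurable hZ.aemeasurable).mpr
      (integrable_condExp.congr hcond.symm)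
  set F : 𝒵 → ℝ := fun z => ∫ z', k z z' * m z' ∂(P.map Z)
  have hF_bdd (z : 𝒵) : |F z| ≤ C * ∫ z', |m z'| ∂(P.map Z) :=
    abs_integral_mul_le_of_abs_le _ (hk_bdd z) hm_int
  have hF_meas : Measurable F := measurable_integral_mul_right _ hk_meas hm
  have h_inner (ω : Ω) :
      ∫ ω', φ (X ω) * (k (Z ω) (Z ω') * φ (X ω')) ∂P = F (Z ω) * φ (X ω) := by
    rw [integral_const_mul, mul_comm, integral_comp_mul_eq_integral_map_mul_of_condExp P hZ hφint
      hm hcond (g := k (Z ω)) (hk_meas.comp measurable_prodMk_left) C (hk_bdd (Z ω))]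
  simp_rw [h_inner]
  rw [integral_comp_mul_eq_integral_map_mul_of_condExp P hZ hφint hm hcond hF_meas _ hF_bdd]
  simp_rw [F, mul_comm _ (m _), ← integral_const_mul]

/-- For a bounded measurable kernel `k` and integrable `φ(X)`,
the double expectation over an independent copy factorizes through the
conditional mean function `m`, where `m ∘ Z` is a version of `E[φ(X) | σ(Z)]`:
`E[φ(X) k(Z,Z') φ(X')] = ∫∫ m(z) k(z,z') m(z') dP_Z(z) dP_Z(z')`. -/
theorem statement_1
    {Ω 𝒳 𝒵 : Type*} [MeasurableSpace Ω] [MeasurableSpace 𝒳] [MeasurableSpace 𝒵]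
    (P : Measure Ω) [IsProbabilityMeasure P]
    (X : Ω → 𝒳) (Z : Ω → 𝒵) (hX : Measurable X) (hZ : Measurable Z)
    (φ : 𝒳 → ℝ) (hφ : Measurable φ)
    (k : 𝒵 → 𝒵 → ℝ) (hk_meas : Measurable (Function.uncurry k))
    (C : ℝ) (hk_bdd : ∀ z z', |k z z'| ≤ C)
    (hφint : Integrable (fun ω => φ (X ω)) P)
    (m : 𝒵 → ℝ) (hm : Measurable m)
    (hcond : (fun ω => m (Z ω)) =ᵐ[P]
      P[(fun ω => φ (X ω)) | MeasurableSpace.comap Z inferInstance]) :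
    ∫ ω, ∫ ω', φ (X ω) * (k (Z ω) (Z ω') * φ (X ω')) ∂P ∂P
      = ∫ z, ∫ z', m z * (k z z' * m z') ∂(P.map Z) ∂(P.map Z) :=
  statement_1_general P X Z hZ φ k hk_meas C hk_bdd hφint m hm hcond
end

section
/- (Theorem 1, sufficiency of the instrument space, integral form.) Suppose k : 𝒵 × 𝒵 → ℝ is bounded, measurable, and integrally strictly positive definite (ISPD) with respect to P_Z, and suppose E[φ(X)²] < ∞. Then E[φ(X) k(Z,Z') φ(X')] = 0 if and only if m = 0 P_Z-almost everywhere, i.e. if and only if E[φ(X) | σ(Z)] = 0 almost surely. -/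
/-!
Write `f = φ ∘ X`. For fixed `z`, the function `k z` is bounded, so the tower property lets us
replace `f` by `m ∘ Z` inside `∫ k z (Z ω') f ω' dP(ω')`; the resulting function of `z` is again
bounded, so the same replacement works in the outer integral. Hence the double expectation equals
`∫∫ m(z) k(z,z') m(z') dP_Z dP_Z`, which vanishes exactly when `m = 0` `P_Z`-a.e. by the ISPD
property, since `m ∈ L²(P_Z)` as the conditional expectation of an `L²` function.
-/

open MeasureTheory

def IntegrallyStrictlyPosDef {𝒵 : Type*} [MeasurableSpace 𝒵] (k : 𝒵 → 𝒵 → ℝ)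
    (ν : Measure 𝒵) : Prop :=
  ∀ g : 𝒵 → ℝ, Measurable g → Integrable (fun z => g z ^ 2) ν → 0 < ∫ z, g z ^ 2 ∂ν →
    0 < ∫ z, ∫ z', g z * (k z z' * g z') ∂ν ∂ν

theorem IntegrallyStrictlyPosDef.integral_integral_eq_zero_iff {𝒵 : Type*}
    [MeasurableSpace 𝒵] {k : 𝒵 → 𝒵 → ℝ} {ν : Measure 𝒵} (hk : IntegrallyStrictlyPosDef k ν)
    {g : 𝒵 → ℝ} (hg : Measurable g) (hg2 : Integrable (fun z => g z ^ 2) ν) :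
    ∫ z, ∫ z', g z * (k z z' * g z') ∂ν ∂ν = 0 ↔ g =ᵐ[ν] 0 := by
  constructor
  · intro h
    by_contra hne
    have hpos : 0 < ∫ z, g z ^ 2 ∂ν := by
      refine (integral_pos_iff_support_of_nonneg (fun z => sq_nonneg (g z)) hg2).2 ?_
      exact pos_iff_ne_zero.2 (by simpa [Function.support, Filter.EventuallyEq, ae_iff] using hne)
    exact (hk g hg hg2 hpos).ne' h
  · intro h
    refine (integral_congr_ae (h.mono fun z hz => ?_)).trans (integral_zero 𝒵 ℝ)
    simp [hz]

section TowerProperty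

variable {Ω 𝒵 : Type*} {m₀ : MeasurableSpace Ω} [MeasurableSpace 𝒵] {μ : Measure Ω}
  [IsFiniteMeasure μ]

theorem integral_mul_condExp_of_bound {m : MeasurableSpace Ω} (hm : m ≤ m₀) {b f : Ω → ℝ}
    (hb : StronglyMeasurable[m] b) (hf : Integrable f μ) (c : ℝ)
    (hb_bdd : ∀ᵐ ω ∂μ, ‖b ω‖ ≤ c) :
    ∫ ω, b ω * f ω ∂μ = ∫ ω, b ω * (μ[f | m]) ω ∂μ :=
  (integral_condExp hm).symm.trans
    (integral_congr_ae (condExp_stronglyMeasurable_mul_of_bound hm hb hf c hb_bdd))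

theorem integral_comp_mul_eq_integral_map_mul {Z : Ω → 𝒵} (hZ : Measurable Z) {f : Ω → ℝ}
    (hf : Integrable f μ) {m : 𝒵 → ℝ} (hm : Measurable m)
    (hcond : (fun ω => m (Z ω)) =ᵐ[μ] μ[f | MeasurableSpace.comap Z inferInstance])
    {b : 𝒵 → ℝ} (hb : Measurable b) {c : ℝ} (hb_bdd : ∀ z, ‖b z‖ ≤ c) :
    ∫ ω, b (Z ω) * f ω ∂μ = ∫ z, b z * m z ∂(μ.map Z) := by
  have hbZ : StronglyMeasurable[MeasurableSpace.comap Z inferInstance] (fun ω => b (Z ω)) :=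
    (hb.comp (comap_measurable Z)).stronglyMeasurable
  rw [integral_mul_condExp_of_bound hZ.comap_le hbZ hf c (.of_forall fun ω => hb_bdd (Z ω)),
    integral_map (f := fun z => b z * m z) hZ.aemeasurable (hb.mul hm).aestronglyMeasurable]
  exact integral_congr_ae (hcond.mono fun ω hω => congrArg (b (Z ω) * ·) hω.symm)

theorem integral_integral_kernel_eq_of_condExp {Z : Ω → 𝒵} (hZ : Measurable Z) {f : Ω → ℝ}
    (hf : Integrable f μ) {k : 𝒵 → 𝒵 → ℝ} (hk : Measurable (Function.uncurry k)) {C : ℝ}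
    (hk_bdd : ∀ z z', |k z z'| ≤ C) {m : 𝒵 → ℝ} (hm : Measurable m)
    (hcond : (fun ω => m (Z ω)) =ᵐ[μ] μ[f | MeasurableSpace.comap Z inferInstance]) :
    ∫ ω, ∫ ω', f ω * (k (Z ω) (Z ω') * f ω') ∂μ ∂μ
      = ∫ z, ∫ z', m z * (k z z' * m z') ∂(μ.map Z) ∂(μ.map Z) := by
  set ν := μ.map Z
  have hm_int : Integrable m ν :=
    (integrable_map_measure hm.aestronglyMeasurable hZ.aemeasurable).2
      (integrable_condExp.congr hcond.symm)
  set H : 𝒵 → ℝ := fun z => ∫ z', k z z' * m z' ∂ν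
  have hH_meas : Measurable H :=
    (hk.mul (hm.comp measurable_snd)).stronglyMeasurable.integral_prod_right'.measurable
  have hH_bdd : ∀ z, ‖H z‖ ≤ C * ∫ z', |m z'| ∂ν := fun z => by
    rw [← integral_const_mul]
    refine norm_integral_le_of_norm_le (hm_int.abs.const_mul C) (.of_forall fun z' => ?_)
    rw [norm_mul, Real.norm_eq_abs, Real.norm_eq_abs]
    exact mul_le_mul_of_nonneg_right (hk_bdd z z') (abs_nonneg _)
  have inner : ∀ z, ∫ ω', k z (Z ω') * f ω' ∂μ = H z := fun z =>
    integral_comp_mul_eq_integral_map_mul hZ hf hm hcond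
      (hk.comp (measurable_const.prodMk measurable_id)) (fun z' => (Real.norm_eq_abs _).trans_le (hk_bdd z z'))
  calc ∫ ω, ∫ ω', f ω * (k (Z ω) (Z ω') * f ω') ∂μ ∂μ
      = ∫ ω, H (Z ω) * f ω ∂μ := by
        simp_rw [integral_const_mul, inner, mul_comm]
    _ = ∫ z, H z * m z ∂ν := integral_comp_mul_eq_integral_map_mul hZ hf hm hcond hH_meas hH_bdd
    _ = ∫ z, ∫ z', m z * (k z z' * m z') ∂ν ∂ν := by
        simp_rw [integral_const_mul, H, mul_comm]

end TowerProperty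

/-- **Theorem 1, integral form.** For a bounded, measurable kernel `k`
that is integrally strictly positive definite (ISPD) w.r.t. `P_Z`, and `E[φ(X)²] < ∞`,
the double expectation `E[φ(X) k(Z,Z') φ(X')]` vanishes iff the conditional mean
function `m` vanishes `P_Z`-a.e., iff `E[φ(X) | σ(Z)] = 0` almost surely. -/
theorem statement_2
    {Ω 𝒳 𝒵 : Type*} [MeasurableSpace Ω] [MeasurableSpace 𝒳] [MeasurableSpace 𝒵]
    (P : Measure Ω) [IsProbabilityMeasure P]
    (X : Ω → 𝒳) (Z : Ω → 𝒵) (hX : Measurable X) (hZ : Measurable Z)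
    (φ : 𝒳 → ℝ) (hφ : Measurable φ)
    (k : 𝒵 → 𝒵 → ℝ) (hk_meas : Measurable (Function.uncurry k))
    (C : ℝ) (hk_bdd : ∀ z z', |k z z'| ≤ C)
    (hispd : ∀ g : 𝒵 → ℝ, Measurable g →
      Integrable (fun z => g z ^ 2) (P.map Z) → 0 < ∫ z, g z ^ 2 ∂(P.map Z) →
      0 < ∫ z, ∫ z', g z * (k z z' * g z') ∂(P.map Z) ∂(P.map Z))
    (hφsq : Integrable (fun ω => φ (X ω) ^ 2) P)
    (m : 𝒵 → ℝ) (hm : Measurable m)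
    (hcond : (fun ω => m (Z ω)) =ᵐ[P]
      P[(fun ω => φ (X ω)) | MeasurableSpace.comap Z inferInstance]) :
    ((∫ ω, ∫ ω', φ (X ω) * (k (Z ω) (Z ω') * φ (X ω')) ∂P ∂P) = 0
        ↔ m =ᵐ[P.map Z] 0) ∧
      ((∫ ω, ∫ ω', φ (X ω) * (k (Z ω) (Z ω') * φ (X ω')) ∂P ∂P) = 0
        ↔ P[(fun ω => φ (X ω)) | MeasurableSpace.comap Z inferInstance] =ᵐ[P] 0) := by
  have hf2 : MemLp (fun ω => φ (X ω)) 2 P :=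
    (memLp_two_iff_integrable_sq (hφ.comp hX).aestronglyMeasurable).2 hφsq
  have hm2 : Integrable (fun z => m z ^ 2) (P.map Z) :=
    (integrable_map_measure (hm.pow_const 2).aestronglyMeasurable hZ.aemeasurable).2 <|
      (memLp_two_iff_integrable_sq (hm.comp hZ).aestronglyMeasurable).1
        ((hf2.condExp one_le_two).ae_eq hcond.symm)
  have hvanish : m =ᵐ[P.map Z] 0 ↔ (fun ω => m (Z ω)) =ᵐ[P] 0 :=
    ae_map_iff hZ.aemeasurable (measurableSet_eq_fun hm measurable_const)
  rw [integral_integral_kernel_eq_of_condExp hZ (hf2.integrable one_le_two) hk_meas hk_bdd hm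
    hcond, IntegrallyStrictlyPosDef.integral_integral_eq_zero_iff hispd hm hm2]
  exact ⟨Iff.rfl, hvanish.trans ⟨hcond.symm.trans, hcond.trans⟩⟩
end

section
/- (Theorem 1, feature-map form.) Suppose sup_{z ∈ 𝒵} ‖Φ(z)‖_H < ∞, the kernel k(z,z') = ⟨Φ(z), Φ(z')⟩_H is integrally strictly positive definite (ISPD) with respect to P_Z, and E[φ(X)²] < ∞. Then sup_{h ∈ H, ‖h‖_H = 1} ( E[φ(X) ⟨Φ(Z), h⟩_H] )² = 0 if and only if E[φ(X) | σ(Z)] = 0 almost surely. -/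
open MeasureTheory
open scoped RealInnerProductSpace

/-!
By Doob–Dynkin, `E[φ(X) | σ(Z)] = g ∘ Z` for a measurable `g ∈ L²(P_Z)`, and pulling the bounded
`σ(Z)`-measurable factor out of the conditional expectation gives
`E[φ(X) ⟪Φ(Z), h⟫] = ∫ g ⟪Φ, h⟫ dP_Z`. The supremum vanishes iff this vanishes for every `h`.
Taking `h = Φ z'` then kills the inner integral of `∫∫ g k g dP_Z dP_Z`, which ISPD allows only
for `g = 0` in `L²(P_Z)`.
-/

section UnitSphere

variable {E : Type*} [NormedAddCommGroup E] [NormedSpace ℝ E]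

theorem sSup_sq_of_norm_eq_one_eq_zero_iff {L : E → ℝ} (hsmul : ∀ (c : ℝ) h, L (c • h) = c * L h)
    (hbdd : ∃ K, ∀ h, ‖h‖ = 1 → |L h| ≤ K) :
    sSup {r : ℝ | ∃ h : E, ‖h‖ = 1 ∧ r = L h ^ 2} = 0 ↔ ∀ h, L h = 0 := by
  constructor
  · intro hsup h
    obtain ⟨K, hK⟩ := hbdd
    have hbddAbove : BddAbove {r : ℝ | ∃ h : E, ‖h‖ = 1 ∧ r = L h ^ 2} := by
      refine ⟨K ^ 2, ?_⟩
      rintro _ ⟨h, hh, rfl⟩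
      exact sq_le_sq' (abs_le.1 (hK h hh)).1 (abs_le.1 (hK h hh)).2
    have hunit : ∀ h : E, ‖h‖ = 1 → L h = 0 := fun h hh =>
      pow_eq_zero_iff two_ne_zero |>.1 <|
        le_antisymm (hsup ▸ le_csSup hbddAbove ⟨h, hh, rfl⟩) (sq_nonneg _)
    rcases eq_or_ne h 0 with rfl | h0
    · simpa using hsmul 0 0
    · have hn : ‖h‖ ≠ 0 := norm_ne_zero_iff.2 h0
      have hnorm : ‖‖h‖⁻¹ • h‖ = 1 := by rw [norm_smul, norm_inv, norm_norm, inv_mul_cancel₀ hn]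
      have := hsmul ‖h‖ (‖h‖⁻¹ • h)
      rwa [smul_inv_smul₀ hn, hunit _ hnorm, mul_zero] at this
  · intro hL
    refine le_antisymm (Real.sSup_nonpos ?_) (Real.sSup_nonneg ?_) <;> rintro _ ⟨h, -, rfl⟩
    · simp [hL h]
    · positivity

end UnitSphere

theorem integral_mul_eq_integral_condExp_mul {Ω : Type*} {m mΩ : MeasurableSpace Ω}
    {μ : Measure Ω} [IsFiniteMeasure μ] (hm : m ≤ mΩ) {f b : Ω → ℝ} (hf : Integrable f μ)
    (hb : StronglyMeasurable[m] b) {K : ℝ} (hbK : ∀ ω, ‖b ω‖ ≤ K) :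
    ∫ ω, f ω * b ω ∂μ = ∫ ω, μ[f | m] ω * b ω ∂μ := by
  have : IsFiniteMeasure (μ.trim hm) := isFiniteMeasure_trim hm
  calc ∫ ω, f ω * b ω ∂μ = ∫ ω, μ[b * f | m] ω ∂μ := by
        rw [integral_condExp hm]; simp only [Pi.mul_apply, mul_comm]
    _ = ∫ ω, (b * μ[f | m]) ω ∂μ :=
        integral_congr_ae (condExp_stronglyMeasurable_mul_of_bound hm hb hf K (.of_forall hbK))
    _ = ∫ ω, μ[f | m] ω * b ω ∂μ := by simp only [Pi.mul_apply, mul_comm]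

section FeatureMap

variable {𝒵 H : Type*} [MeasurableSpace 𝒵] [NormedAddCommGroup H] [InnerProductSpace ℝ H]

/-- Integral strict positive definiteness of the kernel `k(z, z') = ⟪Φ z, Φ z'⟫` w.r.t. `ν`. -/
def IsIntegrallyStrictlyPosDef (ν : Measure 𝒵) (Φ : 𝒵 → H) : Prop :=
  ∀ g : 𝒵 → ℝ, Measurable g → Integrable (fun z => g z ^ 2) ν → 0 < ∫ z, g z ^ 2 ∂ν →
    0 < ∫ z, ∫ z', g z * (⟪Φ z, Φ z'⟫ * g z') ∂ν ∂ν

theorem integral_integral_mul_inner_mul_eq_zero {ν : Measure 𝒵} {Φ : 𝒵 → H} {g : 𝒵 → ℝ}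
    (hg : ∀ h, ∫ z, g z * ⟪Φ z, h⟫ ∂ν = 0) :
    ∫ z, ∫ z', g z * (⟪Φ z, Φ z'⟫ * g z') ∂ν ∂ν = 0 := by
  have hinner (z : 𝒵) : ∫ z', g z * (⟪Φ z, Φ z'⟫ * g z') ∂ν = 0 := by
    simp_rw [real_inner_comm _ (Φ z), mul_comm _ (g _)]
    rw [integral_const_mul, hg, mul_zero]
  simp [hinner]

theorem IsIntegrallyStrictlyPosDef.forall_integral_mul_inner_eq_zero_iff {ν : Measure 𝒵}
    {Φ : 𝒵 → H} (hΦ : IsIntegrallyStrictlyPosDef ν Φ) {g : 𝒵 → ℝ} (hg : Measurable g)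
    (hg2 : Integrable (fun z => g z ^ 2) ν) :
    (∀ h, ∫ z, g z * ⟪Φ z, h⟫ ∂ν = 0) ↔ g =ᵐ[ν] 0 := by
  constructor
  · intro horth
    have hnpos : ¬ 0 < ∫ z, g z ^ 2 ∂ν := fun hpos =>
      (hΦ g hg hg2 hpos).ne' (integral_integral_mul_inner_mul_eq_zero horth)
    have hzero : ∫ z, g z ^ 2 ∂ν = 0 :=
      le_antisymm (not_lt.1 hnpos) (integral_nonneg fun _ => sq_nonneg _)
    filter_upwards [(integral_eq_zero_iff_of_nonneg (fun _ => sq_nonneg _) hg2).1 hzero]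
      with z hz
    exact pow_eq_zero_iff two_ne_zero |>.1 hz
  · intro hg0 h
    refine integral_eq_zero_of_ae ?_
    filter_upwards [hg0] with z hz
    simp [hz]

end FeatureMap

theorem statement_3_general
    {Ω 𝒳 𝒵 : Type*} [MeasurableSpace Ω] [MeasurableSpace 𝒳] [MeasurableSpace 𝒵]
    (P : Measure Ω) [IsProbabilityMeasure P]
    (X : Ω → 𝒳) (Z : Ω → 𝒵) (hX : Measurable X) (hZ : Measurable Z)
    (φ : 𝒳 → ℝ) (hφ : Measurable φ)
    {H : Type*} [NormedAddCommGroup H] [InnerProductSpace ℝ H]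
    (Φ : 𝒵 → H) (hΦ : StronglyMeasurable Φ)
    (C : ℝ) (hΦ_bdd : ∀ z, ‖Φ z‖ ≤ C)
    (hispd : ∀ g : 𝒵 → ℝ, Measurable g →
      Integrable (fun z => g z ^ 2) (P.map Z) → 0 < ∫ z, g z ^ 2 ∂(P.map Z) →
      0 < ∫ z, ∫ z', g z * (⟪Φ z, Φ z'⟫ * g z') ∂(P.map Z) ∂(P.map Z))
    (hφsq : Integrable (fun ω => φ (X ω) ^ 2) P) :
    sSup {r : ℝ | ∃ h : H, ‖h‖ = 1 ∧
        r = (∫ ω, φ (X ω) * ⟪Φ (Z ω), h⟫ ∂P) ^ 2} = 0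
      ↔ P[(fun ω => φ (X ω)) | MeasurableSpace.comap Z inferInstance] =ᵐ[P] 0 := by
  have hf : MemLp (fun ω => φ (X ω)) 2 P :=
    (memLp_two_iff_integrable_sq (hφ.comp hX).aestronglyMeasurable).2 hφsq
  have hfeature (h : H) : StronglyMeasurable fun z => ⟪Φ z, h⟫ :=
    hΦ.inner stronglyMeasurable_const
  have hbound (h : H) (ω : Ω) : ‖⟪Φ (Z ω), h⟫‖ ≤ C * ‖h‖ :=
    (norm_inner_le_norm _ _).trans (mul_le_mul_of_nonneg_right (hΦ_bdd _) (norm_nonneg _))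
  obtain ⟨g, hg, hgZ⟩ := (stronglyMeasurable_condExp (m := MeasurableSpace.comap Z inferInstance)
    (f := fun ω => φ (X ω)) (μ := P)).exists_eq_measurable_comp
  have hg2 : Integrable (fun z => g z ^ 2) (P.map Z) := by
    rw [integrable_map_measure (hg.measurable.pow_const 2).aestronglyMeasurable hZ.aemeasurable]
    simpa [hgZ, Function.comp_def] using (hf.condExp (m := MeasurableSpace.comap Z inferInstance)
      one_le_two).integrable_sq
  have hpull (h : H) :
      ∫ ω, φ (X ω) * ⟪Φ (Z ω), h⟫ ∂P = ∫ z, g z * ⟪Φ z, h⟫ ∂(P.map Z) := by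
    rw [integral_mul_eq_integral_condExp_mul hZ.comap_le (hf.integrable one_le_two)
        (b := fun ω => ⟪Φ (Z ω), h⟫) ((hfeature h).comp_measurable (comap_measurable Z))
        (hbound h), hgZ]
    exact (integral_map hZ.aemeasurable (hg.mul (hfeature h)).aestronglyMeasurable).symm
  rw [sSup_sq_of_norm_eq_one_eq_zero_iff (L := fun h => ∫ ω, φ (X ω) * ⟪Φ (Z ω), h⟫ ∂P)
    (fun c h => by simp only [real_inner_smul_right, mul_left_comm _ c, integral_const_mul])
    ⟨∫ ω, |φ (X ω)| * C ∂P, fun h hh => ?_⟩]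
  · simp_rw [hpull, IsIntegrallyStrictlyPosDef.forall_integral_mul_inner_eq_zero_iff hispd
      hg.measurable hg2, hgZ]
    exact ae_map_iff hZ.aemeasurable (measurableSet_eq_fun hg.measurable measurable_const)
  · rw [← Real.norm_eq_abs]
    refine norm_integral_le_of_norm_le ((hf.integrable one_le_two).abs.mul_const C)
      (.of_forall fun ω => ?_)
    simpa [abs_mul, hh] using mul_le_mul_of_nonneg_left (hbound h ω) (abs_nonneg (φ (X ω)))

/-- **Theorem 1, feature-map form.** If `sup_z ‖Φ(z)‖ < ∞`, the kernel
`k(z,z') = ⟪Φ z, Φ z'⟫` is ISPD w.r.t. `P_Z`, and `E[φ(X)²] < ∞`, then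
`sup_{‖h‖=1} (E[φ(X) ⟪Φ(Z), h⟫])² = 0` iff `E[φ(X) | σ(Z)] = 0` almost surely. -/
theorem statement_3
    {Ω 𝒳 𝒵 : Type*} [MeasurableSpace Ω] [MeasurableSpace 𝒳] [MeasurableSpace 𝒵]
    (P : Measure Ω) [IsProbabilityMeasure P]
    (X : Ω → 𝒳) (Z : Ω → 𝒵) (hX : Measurable X) (hZ : Measurable Z)
    (φ : 𝒳 → ℝ) (hφ : Measurable φ)
    {H : Type*} [NormedAddCommGroup H] [InnerProductSpace ℝ H] [Nontrivial H]
    (Φ : 𝒵 → H) (hΦ : StronglyMeasurable Φ)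
    (C : ℝ) (hΦ_bdd : ∀ z, ‖Φ z‖ ≤ C)
    (hispd : ∀ g : 𝒵 → ℝ, Measurable g →
      Integrable (fun z => g z ^ 2) (P.map Z) → 0 < ∫ z, g z ^ 2 ∂(P.map Z) →
      0 < ∫ z, ∫ z', g z * (⟪Φ z, Φ z'⟫ * g z') ∂(P.map Z) ∂(P.map Z))
    (hφsq : Integrable (fun ω => φ (X ω) ^ 2) P) :
    sSup {r : ℝ | ∃ h : H, ‖h‖ = 1 ∧
        r = (∫ ω, φ (X ω) * ⟪Φ (Z ω), h⟫ ∂P) ^ 2} = 0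
      ↔ P[(fun ω => φ (X ω)) | MeasurableSpace.comap Z inferInstance] =ᵐ[P] 0 :=
  statement_3_general P X Z hX hZ φ hφ Φ hΦ C hΦ_bdd hispd hφsq
end

section
/- (Strong law for V-statistics of bounded kernels.) Let (Z_i)_{i≥1} be an i.i.d. sequence of 𝒵-valued random variables with common law ν, and let f : 𝒵 × 𝒵 → ℝ be a bounded measurable function. Then, almost surely, n^{-2} Σ_{i=1}^n Σ_{j=1}^n f(Z_i, Z_j) → ∫∫ f(z,z') dν(z) dν(z') as n → ∞. -/
open MeasureTheory ProbabilityTheory Filter Topology Finset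

/-!
Write `V n = n⁻² ∑_{i,j<n} f (Z i) (Z j)` and `θ = ∫∫ f dν dν`. Only the `n` diagonal terms have
mean `∫ f z z dν` instead of `θ`, so `𝔼 V n → θ`. The summands `f (Z i) (Z j)` and
`f (Z k) (Z l)` are independent unless the index pairs share an index, so at most `4 n³` of the
`n⁴` covariances in the variance of the double sum are nonzero, and `Var (V n) = O(1/n)`. Along
the squares `n = k²` these variances are summable, which forces `V (k²) - 𝔼 V (k²) → 0` almost
surely; between consecutive squares `V` moves by `O(1/k)` because `f` is bounded.
-/

noncomputable def squareAvg (a : ℕ → ℕ → ℝ) (n : ℕ) : ℝ :=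
  ((n : ℝ) ^ 2)⁻¹ * ∑ i ∈ range n, ∑ j ∈ range n, a i j

section SquareAvg

variable {a : ℕ → ℕ → ℝ} {C : ℝ}

lemma abs_sum_range_range_sub_le (ha : ∀ i j, |a i j| ≤ C) {n N : ℕ} (hnN : n ≤ N) :
    |∑ i ∈ range N, ∑ j ∈ range N, a i j - ∑ i ∈ range n, ∑ j ∈ range n, a i j|
      ≤ C * ((N : ℝ) ^ 2 - (n : ℝ) ^ 2) := by
  have hsub : range n ×ˢ range n ⊆ range N ×ˢ range N := by gcongr
  rw [← sum_product' (f := a), ← sum_product' (f := a), ← sum_sdiff_eq_sub hsub]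
  calc _ ≤ ∑ p ∈ range N ×ˢ range N \ range n ×ˢ range n, C :=
        (abs_sum_le_sum_abs _ _).trans (sum_le_sum fun p _ => ha p.1 p.2)
    _ = C * ((N : ℝ) ^ 2 - (n : ℝ) ^ 2) := by
        rw [sum_const, card_sdiff_of_subset hsub, nsmul_eq_mul, card_product, card_product,
          card_range, card_range, Nat.cast_sub (Nat.mul_le_mul hnN hnN)]
        push_cast
        ring

lemma abs_squareAvg_sub_le (ha : ∀ i j, |a i j| ≤ C) {n N : ℕ} (hn : 0 < n) (hnN : n ≤ N) :
    |squareAvg a N - squareAvg a n| ≤ 2 * C * (1 - ((n : ℝ) / N) ^ 2) := by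
  have hn' : (0 : ℝ) < n := by exact_mod_cast hn
  have hnN' : (n : ℝ) ≤ N := by exact_mod_cast hnN
  have hN' : (0 : ℝ) < N := hn'.trans_le hnN'
  have hinv : ((N : ℝ) ^ 2)⁻¹ ≤ ((n : ℝ) ^ 2)⁻¹ := by gcongr
  have hSn := abs_sum_range_range_sub_le ha (Nat.zero_le n)
  simp only [range_zero, sum_empty, sub_zero, Nat.cast_zero] at hSn
  have hSN := abs_sum_range_range_sub_le ha hnN
  set Sn := ∑ i ∈ range n, ∑ j ∈ range n, a i j
  set SN := ∑ i ∈ range N, ∑ j ∈ range N, a i j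
  have hsplit : squareAvg a N - squareAvg a n
      = ((N : ℝ) ^ 2)⁻¹ * (SN - Sn) - (((n : ℝ) ^ 2)⁻¹ - ((N : ℝ) ^ 2)⁻¹) * Sn := by
    simp only [squareAvg]; ring
  calc |squareAvg a N - squareAvg a n|
      ≤ ((N : ℝ) ^ 2)⁻¹ * |SN - Sn| + (((n : ℝ) ^ 2)⁻¹ - ((N : ℝ) ^ 2)⁻¹) * |Sn| := by
        rw [hsplit]
        refine (abs_sub _ _).trans (add_le_add ?_ ?_) <;>
          rw [abs_mul, abs_of_nonneg (by linarith [inv_nonneg.2 (sq_nonneg (N : ℝ))])]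
    _ ≤ ((N : ℝ) ^ 2)⁻¹ * (C * ((N : ℝ) ^ 2 - (n : ℝ) ^ 2))
          + (((n : ℝ) ^ 2)⁻¹ - ((N : ℝ) ^ 2)⁻¹) * (C * (n : ℝ) ^ 2) := by
        gcongr; linarith
    _ = 2 * C * (1 - ((n : ℝ) / N) ^ 2) := by field_simp; ring

lemma one_sub_sq_div_le {k N : ℝ} (hk : 0 < k) (hkN : k ^ 2 ≤ N) (hNk : N ≤ k ^ 2 + 2 * k) :
    1 - (k ^ 2 / N) ^ 2 ≤ 4 / k := by
  have hN : 0 < N := (pow_pos hk 2).trans_le hkN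
  rw [div_pow, one_sub_div (by positivity), div_le_div_iff₀ (by positivity) hk]
  have h1 : N ^ 2 - (k ^ 2) ^ 2 ≤ 4 * k * N := by nlinarith
  nlinarith

lemma tendsto_squareAvg_of_tendsto_sq (ha : ∀ i j, |a i j| ≤ C) {θ : ℝ}
    (h : Tendsto (fun k => squareAvg a (k ^ 2)) atTop (𝓝 θ)) :
    Tendsto (squareAvg a) atTop (𝓝 θ) := by
  have hC : 0 ≤ C := (abs_nonneg _).trans (ha 0 0)
  have hsqrt : Tendsto Nat.sqrt atTop atTop :=
    tendsto_atTop_atTop.2 fun b => ⟨b * b, fun N hN => Nat.le_sqrt.2 hN⟩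
  have hgap : Tendsto (fun N => 8 * C / (Nat.sqrt N : ℝ)) atTop (𝓝 0) :=
    (tendsto_const_div_atTop_nhds_zero_nat _).comp hsqrt
  have hdiff : Tendsto (fun N => squareAvg a N - squareAvg a (Nat.sqrt N ^ 2)) atTop (𝓝 0) := by
    refine squeeze_zero_norm' ?_ hgap
    filter_upwards [eventually_ge_atTop 1] with N hN
    have hk : 0 < Nat.sqrt N := Nat.sqrt_pos.2 hN
    have hNk : N ≤ Nat.sqrt N ^ 2 + 2 * Nat.sqrt N := by
      have := Nat.lt_succ_sqrt' N; nlinarith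
    calc ‖squareAvg a N - squareAvg a (Nat.sqrt N ^ 2)‖
        ≤ 2 * C * (1 - (((Nat.sqrt N ^ 2 : ℕ) : ℝ) / N) ^ 2) :=
          abs_squareAvg_sub_le ha (pow_pos hk 2) (Nat.sqrt_le' N)
      _ ≤ 2 * C * (4 / Nat.sqrt N) := by
          gcongr
          push_cast
          exact one_sub_sq_div_le (by exact_mod_cast hk) (by exact_mod_cast Nat.sqrt_le' N)
            (by exact_mod_cast hNk)
      _ = 8 * C / Nat.sqrt N := by ring
  simpa using (h.comp hsqrt).add hdiff

end SquareAvg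

lemma squareAvg_ite_eq (d θ : ℝ) {n : ℕ} (hn : n ≠ 0) :
    squareAvg (fun i j => if i = j then d else θ) n = θ + (d - θ) / n := by
  have hsplit : ∀ i j : ℕ, (if i = j then d else θ) = θ + if i = j then d - θ else 0 := by
    intro i j; split_ifs <;> ring
  simp only [squareAvg, hsplit, sum_add_distrib, sum_ite_eq, mem_range, sum_const, card_range,
    nsmul_eq_mul]
  rw [sum_congr rfl fun i hi => if_pos (mem_range.1 hi), sum_const, card_range, nsmul_eq_mul]
  field_simp

lemma tendsto_squareAvg_ite (d θ : ℝ) :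
    Tendsto (squareAvg fun i j => if i = j then d else θ) atTop (𝓝 θ) := by
  have h : Tendsto (fun n : ℕ => θ + (d - θ) / n) atTop (𝓝 (θ + 0)) :=
    tendsto_const_nhds.add (tendsto_const_div_atTop_nhds_zero_nat _)
  rw [add_zero] at h
  exact h.congr' (eventually_ne_atTop 0 |>.mono fun n hn => (squareAvg_ite_eq d θ hn).symm)

section Moments

variable {Ω : Type*} [MeasurableSpace Ω] {μ : Measure Ω}

lemma abs_integral_le_of_forall_abs_le [IsProbabilityMeasure μ] {X : Ω → ℝ} {C : ℝ}
    (hX : ∀ ω, |X ω| ≤ C) : |∫ ω, X ω ∂μ| ≤ C := by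
  simpa using norm_integral_le_of_norm_le_const (μ := μ) (f := X) (.of_forall hX)

lemma abs_covariance_le [IsProbabilityMeasure μ] {X Y : Ω → ℝ} {C : ℝ} (hX : ∀ ω, |X ω| ≤ C)
    (hY : ∀ ω, |Y ω| ≤ C) : |cov[X, Y; μ]| ≤ 4 * C ^ 2 := by
  have hcentered : ∀ {W : Ω → ℝ}, (∀ ω, |W ω| ≤ C) → ∀ ω, |W ω - μ[W]| ≤ 2 * C := fun hW ω =>
    (abs_sub _ _).trans (by linarith [hW ω, abs_integral_le_of_forall_abs_le (μ := μ) hW])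
  refine abs_integral_le_of_forall_abs_le fun ω => ?_
  rw [abs_mul]
  nlinarith [hcentered hX ω, hcentered hY ω, abs_nonneg (X ω - μ[X]), abs_nonneg (Y ω - μ[Y])]

lemma ae_tendsto_sub_integral_of_summable_variance [IsFiniteMeasure μ] {X : ℕ → Ω → ℝ}
    (hX : ∀ k, MemLp (X k) 2 μ) (h : Summable fun k => Var[X k; μ]) :
    ∀ᵐ ω ∂μ, Tendsto (fun k => X k ω - μ[X k]) atTop (𝓝 0) := by
  have hmeas : ∀ k, AEMeasurable (fun ω => ‖X k ω - μ[X k]‖ₑ ^ 2) μ := fun k =>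
    ((hX k).aestronglyMeasurable.aemeasurable.sub_const _).enorm.pow_const 2
  have hfin : ∫⁻ ω, ∑' k, ‖X k ω - μ[X k]‖ₑ ^ 2 ∂μ ≠ ⊤ := by
    rw [lintegral_tsum hmeas]
    change ∑' k, evariance (X k) μ ≠ ⊤
    simp_rw [← ofReal_variance (hX _)]
    rw [← ENNReal.ofReal_tsum_of_nonneg (fun k => variance_nonneg _ _) h]
    exact ENNReal.ofReal_ne_top
  filter_upwards [ae_lt_top' (AEMeasurable.tsum hmeas) hfin] with ω hω
  have hsqrt := ((ENNReal.continuous_rpow_const (y := ((2 : ℕ) : ℝ)⁻¹)).tendsto 0).comp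
    (ENNReal.tendsto_atTop_zero_of_tsum_ne_top hω.ne)
  simp only [Function.comp_def, ENNReal.pow_rpow_inv_natCast two_ne_zero] at hsqrt
  exact tendsto_zero_iff_enorm_tendsto_zero.2 (by simpa using hsqrt)

variable {X : ℕ → ℕ → Ω → ℝ} {B : ℝ}

lemma sum_sum_shared_index_indicator (n : ℕ) :
    ∑ p ∈ range n ×ˢ range n, ∑ q ∈ range n ×ˢ range n,
      ((if p.1 = q.1 then 1 else 0) + (if p.1 = q.2 then 1 else 0)
        + (if p.2 = q.1 then 1 else 0) + (if p.2 = q.2 then 1 else 0) : ℝ) = 4 * n ^ 3 := by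
  have hinner : ∀ p ∈ range n ×ˢ range n, ∑ q ∈ range n ×ˢ range n,
      ((if p.1 = q.1 then 1 else 0) + (if p.1 = q.2 then 1 else 0)
        + (if p.2 = q.1 then 1 else 0) + (if p.2 = q.2 then 1 else 0) : ℝ) = 4 * n := by
    have hfst : ∀ a < n, ∑ q ∈ range n ×ˢ range n, (if a = q.1 then 1 else 0 : ℝ) = n := by
      intro a ha; rw [sum_product_right]; simp [ha]
    have hsnd : ∀ a < n, ∑ q ∈ range n ×ˢ range n, (if a = q.2 then 1 else 0 : ℝ) = n := by
      intro a ha; rw [sum_product]; simp [ha]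
    rintro ⟨i, j⟩ hp
    simp only [mem_product, mem_range] at hp
    simp only [sum_add_distrib, hfst i hp.1, hfst j hp.2, hsnd i hp.1, hsnd j hp.2]
    ring
  rw [sum_congr rfl hinner]
  simp only [sum_const, card_product, card_range, nsmul_eq_mul, Nat.cast_mul]
  ring

lemma variance_sum_range_range_le [IsFiniteMeasure μ] (hX : ∀ i j, MemLp (X i j) 2 μ)
    (hB : ∀ i j k l, |cov[X i j, X k l; μ]| ≤ B)
    (hcov : ∀ i j k l, i ≠ k → i ≠ l → j ≠ k → j ≠ l → cov[X i j, X k l; μ] = 0) (n : ℕ) :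
    Var[fun ω => ∑ i ∈ range n, ∑ j ∈ range n, X i j ω; μ] ≤ 4 * B * n ^ 3 := by
  have hB0 : 0 ≤ B := (abs_nonneg _).trans (hB 0 0 0 0)
  simp_rw [← sum_product' (range n) (range n) fun i j => X i j _]
  rw [variance_fun_sum' fun p _ => hX p.1 p.2,
    show 4 * B * (n : ℝ) ^ 3 = B * (4 * n ^ 3) by ring, ← sum_sum_shared_index_indicator, mul_sum]
  refine sum_le_sum fun p _ => ?_
  rw [mul_sum]
  refine sum_le_sum fun q _ => ?_
  by_cases hshare : p.1 = q.1 ∨ p.1 = q.2 ∨ p.2 = q.1 ∨ p.2 = q.2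
  · calc cov[X p.1 p.2, X q.1 q.2; μ] ≤ B := (le_abs_self _).trans (hB _ _ _ _)
      _ ≤ _ := by
        refine le_mul_of_one_le_right hB0 ?_
        rcases hshare with h | h | h | h <;> simp only [h] <;> split_ifs <;> norm_num
  · push Not at hshare
    obtain ⟨h1, h2, h3, h4⟩ := hshare
    simp [hcov _ _ _ _ h1 h2 h3 h4, h1, h2, h3, h4]

lemma variance_squareAvg_le [IsFiniteMeasure μ] (hX : ∀ i j, MemLp (X i j) 2 μ)
    (hB : ∀ i j k l, |cov[X i j, X k l; μ]| ≤ B)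
    (hcov : ∀ i j k l, i ≠ k → i ≠ l → j ≠ k → j ≠ l → cov[X i j, X k l; μ] = 0) (n : ℕ) :
    Var[fun ω => squareAvg (fun i j => X i j ω) n; μ] ≤ 4 * B / n := by
  unfold squareAvg
  rw [variance_const_mul]
  calc _ ≤ (((n : ℝ) ^ 2)⁻¹) ^ 2 * (4 * B * n ^ 3) := by
        gcongr; exact variance_sum_range_range_le hX hB hcov n
    _ = 4 * B / n := by
        rcases eq_or_ne n 0 with rfl | hn
        · simp
        · field_simp

lemma integral_squareAvg (hX : ∀ i j, Integrable (X i j) μ) (n : ℕ) :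
    ∫ ω, squareAvg (fun i j => X i j ω) n ∂μ = squareAvg (fun i j => ∫ ω, X i j ω ∂μ) n := by
  simp only [squareAvg]
  rw [integral_const_mul, integral_finsetSum _ fun i _ => integrable_finsetSum _ fun j _ => hX i j]
  simp_rw [integral_finsetSum _ fun j _ => hX _ j]

end Moments

section Pairs

variable {Ω 𝒵 : Type*} [MeasurableSpace Ω] [MeasurableSpace 𝒵] {P : Measure Ω} {ν : Measure 𝒵}
  {Z : ℕ → Ω → 𝒵}

lemma map_pair_eq_prod [IsFiniteMeasure P] (hZ_meas : ∀ i, Measurable (Z i))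
    (hZ_indep : iIndepFun Z P) (hZ_law : ∀ i, P.map (Z i) = ν) {i j : ℕ} (hij : i ≠ j) :
    P.map (fun ω => (Z i ω, Z j ω)) = ν.prod ν := by
  rw [(indepFun_iff_map_prod_eq_prod_map_map (hZ_meas i).aemeasurable
    (hZ_meas j).aemeasurable).1 (hZ_indep.indepFun hij), hZ_law i, hZ_law j]

lemma integral_comp_pair_of_ne [IsFiniteMeasure P] [SFinite ν] (hZ_meas : ∀ i, Measurable (Z i))
    (hZ_indep : iIndepFun Z P) (hZ_law : ∀ i, P.map (Z i) = ν) {f : 𝒵 → 𝒵 → ℝ}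
    (hf : Integrable (Function.uncurry f) (ν.prod ν)) {i j : ℕ} (hij : i ≠ j) :
    ∫ ω, f (Z i ω) (Z j ω) ∂P = ∫ z, ∫ z', f z z' ∂ν ∂ν := by
  have hpair := map_pair_eq_prod hZ_meas hZ_indep hZ_law hij
  calc ∫ ω, f (Z i ω) (Z j ω) ∂P
        = ∫ p, Function.uncurry f p ∂(P.map fun ω => (Z i ω, Z j ω)) := by
        rw [integral_map ((hZ_meas i).prodMk (hZ_meas j)).aemeasurable
          (hpair ▸ hf.aestronglyMeasurable)]
        rfl
    _ = ∫ z, ∫ z', f z z' ∂ν ∂ν := by rw [hpair]; exact integral_prod _ hf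

lemma integral_comp_diag (hZ_meas : ∀ i, Measurable (Z i)) (hZ_law : ∀ i, P.map (Z i) = ν)
    {f : 𝒵 → 𝒵 → ℝ} (hf : AEStronglyMeasurable (fun z => f z z) ν) (i : ℕ) :
    ∫ ω, f (Z i ω) (Z i ω) ∂P = ∫ z, f z z ∂ν := by
  rw [← hZ_law i] at hf ⊢
  exact (integral_map (hZ_meas i).aemeasurable hf).symm

lemma integral_comp_pair [IsFiniteMeasure P] [SFinite ν] (hZ_meas : ∀ i, Measurable (Z i))
    (hZ_indep : iIndepFun Z P) (hZ_law : ∀ i, P.map (Z i) = ν) {f : 𝒵 → 𝒵 → ℝ}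
    (hf_meas : Measurable (Function.uncurry f)) (hf : Integrable (Function.uncurry f) (ν.prod ν))
    (i j : ℕ) :
    ∫ ω, f (Z i ω) (Z j ω) ∂P = if i = j then ∫ z, f z z ∂ν else ∫ z, ∫ z', f z z' ∂ν ∂ν := by
  split_ifs with hij
  · subst hij
    exact integral_comp_diag hZ_meas hZ_law
      (hf_meas.comp (measurable_id.prodMk measurable_id)).aestronglyMeasurable i
  · exact integral_comp_pair_of_ne hZ_meas hZ_indep hZ_law hf hij

lemma covariance_comp_pair_eq_zero (hZ_meas : ∀ i, Measurable (Z i)) (hZ_indep : iIndepFun Z P)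
    {φ : 𝒵 × 𝒵 → ℝ} (hφ : Measurable φ) (hφ2 : ∀ i j, MemLp (fun ω => φ (Z i ω, Z j ω)) 2 P)
    {i j k l : ℕ} (hik : i ≠ k) (hil : i ≠ l) (hjk : j ≠ k) (hjl : j ≠ l) :
    cov[fun ω => φ (Z i ω, Z j ω), fun ω => φ (Z k ω, Z l ω); P] = 0 :=
  ((hZ_indep.indepFun_prodMk_prodMk hZ_meas i j k l hik hil hjk hjl).comp hφ hφ
    ).covariance_eq_zero (hφ2 i j) (hφ2 k l)

end Pairs

/-- **strong law for V-statistics of bounded kernels.**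
For an i.i.d. sequence `Z i` with law `ν` and a bounded measurable
`f : 𝒵 × 𝒵 → ℝ`, almost surely
`n⁻² Σ_{i,j<n} f(Z_i, Z_j) → ∫∫ f dν dν` as `n → ∞`. -/
theorem statement_8
    {Ω 𝒵 : Type*} [MeasurableSpace Ω] [MeasurableSpace 𝒵]
    (P : Measure Ω) [IsProbabilityMeasure P]
    (ν : Measure 𝒵) [IsProbabilityMeasure ν]
    (Z : ℕ → Ω → 𝒵) (hZ_meas : ∀ i, Measurable (Z i))
    (hZ_indep : ProbabilityTheory.iIndepFun Z P)
    (hZ_law : ∀ i, P.map (Z i) = ν)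
    (f : 𝒵 → 𝒵 → ℝ) (hf_meas : Measurable (Function.uncurry f))
    (C : ℝ) (hf_bdd : ∀ z z', |f z z'| ≤ C) :
    ∀ᵐ ω ∂P, Tendsto
      (fun n : ℕ => ((n : ℝ) ^ 2)⁻¹ *
        ∑ i ∈ Finset.range n, ∑ j ∈ Finset.range n, f (Z i ω) (Z j ω))
      atTop (nhds (∫ z, ∫ z', f z z' ∂ν ∂ν)) := by
  have hF : ∀ i j, MemLp (fun ω => f (Z i ω) (Z j ω)) 2 P := fun i j =>
    .of_bound (hf_meas.comp ((hZ_meas i).prodMk (hZ_meas j))).aestronglyMeasurable C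
      (.of_forall fun ω => hf_bdd _ _)
  have hV : ∀ n, MemLp (fun ω => squareAvg (fun i j => f (Z i ω) (Z j ω)) n) 2 P := fun n =>
    (memLp_finsetSum _ fun i _ => memLp_finsetSum _ fun j _ => hF i j).const_mul _
  have hmean := integral_comp_pair hZ_meas hZ_indep hZ_law hf_meas
    (.of_bound hf_meas.aestronglyMeasurable C (.of_forall fun p => hf_bdd p.1 p.2))
  have hvar : Summable fun k : ℕ =>
      Var[fun ω => squareAvg (fun i j => f (Z i ω) (Z j ω)) (k ^ 2); P] := by
    have hcov_le := fun k : ℕ => variance_squareAvg_le hF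
      (fun _ _ _ _ => abs_covariance_le (fun _ => hf_bdd _ _) (fun _ => hf_bdd _ _))
      (fun _ _ _ _ => covariance_comp_pair_eq_zero hZ_meas hZ_indep hf_meas hF) (k ^ 2)
    refine .of_nonneg_of_le (fun k => variance_nonneg _ _) hcov_le ?_
    simpa [div_eq_mul_inv] using
      (Real.summable_one_div_nat_pow.2 one_lt_two).mul_left (4 * (4 * C ^ 2))
  have hlim : Tendsto (fun k : ℕ => P[fun ω => squareAvg (fun i j => f (Z i ω) (Z j ω)) (k ^ 2)])
      atTop (𝓝 (∫ z, ∫ z', f z z' ∂ν ∂ν)) := by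
    simp_rw [integral_squareAvg fun i j => (hF i j).integrable one_le_two, hmean]
    exact (tendsto_squareAvg_ite _ _).comp (tendsto_pow_atTop two_ne_zero)
  filter_upwards [ae_tendsto_sub_integral_of_summable_variance (fun k => hV (k ^ 2)) hvar]
    with ω hω
  exact tendsto_squareAvg_of_tendsto_sq (fun i j => hf_bdd _ _) (by simpa using hω.add hlim)
end
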